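/- Let ρ be a density matrix with spectral decomposition ρ = Σ_{j=1}^k p_j |ψ_j⟩⟨ψ_j| with p_1 ≥ p_2 ≥ ... ≥ p_k, and let σ be any density matrix of rank at most r on the same space. Then F(ρ,σ) ≤ Σ_{j=1}^r p_j, where F is the squared fidelity. -/

import Mathlib

open Matrix Kronecker Finset ComplexOrder

noncomputable section
namespace QAE

/-- Partial trace over the second tensor factor. -/
def ptraceB {A B : Type*} [Fintype B] (ρ : Matrix (A × B) (A × B) ℂ) : Matrix A A ℂ :=
  Matrix.of fun i j => ∑ k : B, ρ (i, k) (j, k)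

/-- Partial trace over the first tensor factor. -/
def ptraceA {A B : Type*} [Fintype A] (ρ : Matrix (A × B) (A × B) ℂ) : Matrix B B ℂ :=
  Matrix.of fun i j => ∑ k : A, ρ (k, i) (k, j)

/-- Outer product |v⟩⟨v|. -/
def outer {A : Type*} (v : A → ℂ) : Matrix A A ℂ := Matrix.vecMulVec v (star v)

/-- The old Mathlib `Matrix.PosSemidef.sqrt` (removed upstream), with its original definition. -/
def _root_.Matrix.PosSemidef.sqrt {𝕜 : Type*} [RCLike 𝕜] {n : Type*} [Fintype n] [DecidableEq n]
    {A : Matrix n n 𝕜} (hA : A.PosSemidef) : Matrix n n 𝕜 :=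
  hA.1.eigenvectorUnitary.1 * diagonal ((↑) ∘ (√·) ∘ hA.1.eigenvalues) *
  (star hA.1.eigenvectorUnitary : Matrix n n 𝕜)

lemma _root_.Matrix.PosSemidef.posSemidef_sqrt {𝕜 : Type*} [RCLike 𝕜] {n : Type*} [Fintype n]
    [DecidableEq n] {A : Matrix n n 𝕜} (hA : A.PosSemidef) : PosSemidef hA.sqrt := by
  apply PosSemidef.mul_mul_conjTranspose_same
  refine posSemidef_diagonal_iff.mpr fun i ↦ ?_
  rw [Function.comp_apply, RCLike.nonneg_iff]
  constructor
  · simp only [Function.comp_apply, RCLike.ofReal_re]; exact Real.sqrt_nonneg _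
  · simp only [Function.comp_apply, RCLike.ofReal_im]

lemma sandwich_psd {n : Type*} [Fintype n] [DecidableEq n] {ρ σ : Matrix n n ℂ}
    (hρ : ρ.PosSemidef) (hσ : σ.PosSemidef) :
    (hσ.sqrt * ρ * hσ.sqrt).PosSemidef := by
  have h := hρ.mul_mul_conjTranspose_same hσ.sqrt
  rwa [hσ.posSemidef_sqrt.isHermitian.eq] at h

-- Squared Uhlmann fidelity F(ρ,σ) = (Tr √(σ^{1/2} ρ σ^{1/2}))².
open Classical in
def sqFidelity {n : Type*} [Fintype n] [DecidableEq n] (ρ σ : Matrix n n ℂ) : ℝ :=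
  if h : ρ.PosSemidef ∧ σ.PosSemidef then
    ((sandwich_psd h.1 h.2).sqrt.trace).re ^ 2
  else 0

/-- A density matrix: positive semidefinite with unit trace. -/
def IsDensity {n : Type*} [Fintype n] [DecidableEq n] (ρ : Matrix n n ℂ) : Prop :=
  ρ.PosSemidef ∧ ρ.trace = 1

end QAE
end

/-!
Let `P` be the projection onto the support of `σ`, so that `P √σ = √σ` and `tr P = rank σ`.
Then `√ρ √σ = (P √ρ)ᴴ √σ`, and the Cauchy–Schwarz inequality for the trace norm,
`‖Aᴴ B‖₁ ≤ ‖A‖₂ ‖B‖₂`, gives `F(ρ, σ) = ‖√ρ √σ‖₁² ≤ tr (P ρ) · tr σ = ∑ⱼ pⱼ qⱼ` with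
`qⱼ = ⟨ψⱼ, P ψⱼ⟩`. The weights `qⱼ` lie in `[0, 1]` and, by Bessel's inequality, sum to at most
`tr P ≤ r`; for decreasing `p` such a weighted sum is at most `p₁ + ⋯ + p_r`.
-/

open WithLp (toLp)
open RCLike (re)

section Bessel

variable {𝕜 : Type*} [RCLike 𝕜] {m n ι : Type*} [Fintype m] [Fintype n]

lemma orthonormal_toLp_iff [DecidableEq ι] {u : ι → n → 𝕜} :
    Orthonormal 𝕜 (fun i => toLp 2 (u i) : ι → EuclideanSpace 𝕜 n) ↔
      ∀ i j, star (u i) ⬝ᵥ u j = if i = j then 1 else 0 := by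
  simp only [orthonormal_iff_ite, EuclideanSpace.inner_toLp_toLp, dotProduct_comm (u _)]

lemma re_star_dotProduct_self (x : n → 𝕜) : re (star x ⬝ᵥ x) = ‖toLp 2 x‖ ^ 2 := by
  rw [← inner_self_eq_norm_sq (𝕜 := 𝕜), EuclideanSpace.inner_toLp_toLp, dotProduct_comm]

lemma re_star_dotProduct_le (x y : n → 𝕜) : re (star x ⬝ᵥ y) ≤ ‖toLp 2 x‖ * ‖toLp 2 y‖ := by
  rw [dotProduct_comm, ← EuclideanSpace.inner_toLp_toLp]
  exact (RCLike.re_le_norm _).trans (norm_inner_le_norm _ _)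

lemma Matrix.re_trace_conjTranspose_mul_self (Y : Matrix m n 𝕜) :
    re (Yᴴ * Y).trace = ∑ a, ∑ b, ‖Y a b‖ ^ 2 := by
  simp only [trace, Matrix.diag, mul_apply, conjTranspose_apply, map_sum, RCLike.star_def,
    RCLike.conj_mul, ← RCLike.ofReal_pow, RCLike.ofReal_re]
  exact Finset.sum_comm

lemma Matrix.sum_norm_sq_mulVec_le_re_trace [Fintype ι] (Y : Matrix m n 𝕜) {u : ι → n → 𝕜}
    (hu : Orthonormal 𝕜 fun i => (toLp 2 (u i) : EuclideanSpace 𝕜 n)) :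
    ∑ i, ‖toLp 2 (Y *ᵥ u i)‖ ^ 2 ≤ re (Yᴴ * Y).trace := by
  set row : m → EuclideanSpace 𝕜 n := fun a => toLp 2 fun b => star (Y a b)
  have mulVec_apply (i a) : (Y *ᵥ u i) a = inner 𝕜 (row a) (toLp 2 (u i)) := by
    simp only [row, EuclideanSpace.inner_toLp_toLp, mulVec, dotProduct, Pi.star_apply, star_star,
      mul_comm]
  calc ∑ i, ‖toLp 2 (Y *ᵥ u i)‖ ^ 2
      = ∑ a, ∑ i, ‖inner 𝕜 (toLp 2 (u i)) (row a)‖ ^ 2 := by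
        simp only [EuclideanSpace.norm_sq_eq, mulVec_apply, norm_inner_symm]
        exact Finset.sum_comm
    _ ≤ ∑ a, ‖row a‖ ^ 2 := Finset.sum_le_sum fun a _ => hu.sum_inner_products_le _
    _ = re (Yᴴ * Y).trace := by
        simp [re_trace_conjTranspose_mul_self, row, EuclideanSpace.norm_sq_eq]

end Bessel

section TraceNorm

variable {𝕜 : Type*} [RCLike 𝕜] {l m n : Type*} [Fintype l] [Fintype m] [Fintype n]
  [DecidableEq l]

/-- `∑ √λᵢ(Xᴴ X)` is the trace norm of `X = Aᴴ B`, so this is `‖Aᴴ B‖₁ ≤ ‖A‖₂ ‖B‖₂`. -/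
theorem Matrix.IsHermitian.sq_sum_sqrt_eigenvalues_le {M : Matrix l l 𝕜} (hM : M.IsHermitian)
    (A : Matrix m n 𝕜) (B : Matrix m l 𝕜) (hAB : M = (Aᴴ * B)ᴴ * (Aᴴ * B)) :
    (∑ i, √(hM.eigenvalues i)) ^ 2 ≤ re (Aᴴ * A).trace * re (Bᴴ * B).trace := by
  set X := Aᴴ * B
  set μ : l → ℝ := fun i => √(hM.eigenvalues i)
  set v : l → l → 𝕜 := fun i => ⇑(hM.eigenvectorBasis i)
  have hv : Orthonormal 𝕜 fun i => toLp 2 (v i) := by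
    simp [v, hM.eigenvectorBasis.orthonormal]
  have hμ_sq (i : l) : μ i ^ 2 = hM.eigenvalues i :=
    Real.sq_sqrt ((hAB ▸ posSemidef_conjTranspose_mul_self X : M.PosSemidef).eigenvalues_nonneg i)
  have gram (i j : l) :
      star (X *ᵥ v i) ⬝ᵥ (X *ᵥ v j) = if i = j then ((μ i ^ 2 : ℝ) : 𝕜) else 0 := by
    rw [star_mulVec, ← dotProduct_mulVec, mulVec_mulVec, ← hAB,
      hM.mulVec_eigenvectorBasis, dotProduct_smul, orthonormal_toLp_iff.mp hv]
    split_ifs with h <;> simp [h, hμ_sq, RCLike.real_smul_eq_coe_mul]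
  set s := {i // μ i ≠ 0}
  -- `u i` is the left singular vector of `X` paired with `v i`
  set u : s → n → 𝕜 := fun i => ((μ i : 𝕜)⁻¹) • X *ᵥ v i
  have hu : Orthonormal 𝕜 fun i => toLp 2 (u i) := by
    refine orthonormal_toLp_iff.mpr fun i j => ?_
    simp only [u, star_smul, smul_dotProduct, dotProduct_smul, gram, Subtype.val_inj]
    split_ifs with h
    · subst h
      have : (μ i : 𝕜) ≠ 0 := RCLike.ofReal_ne_zero.mpr i.2
      simp only [smul_eq_mul, RCLike.star_def, map_inv₀, RCLike.conj_ofReal, RCLike.ofReal_pow]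
      field_simp
    · simp
  have singular_value (i : s) : μ i = re (star (A *ᵥ u i) ⬝ᵥ (B *ᵥ v i)) := by
    have : (μ i : 𝕜) ≠ 0 := RCLike.ofReal_ne_zero.mpr i.2
    rw [star_mulVec, ← dotProduct_mulVec, mulVec_mulVec]
    simp only [u, star_smul, smul_dotProduct, RCLike.star_def, map_inv₀, RCLike.conj_ofReal,
      smul_eq_mul]
    rw [gram, if_pos rfl, RCLike.ofReal_pow]
    field_simp
    exact (RCLike.ofReal_re _).symm
  have sum_eq : ∑ i, μ i = ∑ i : s, μ i :=
    (Finset.sum_filter_ne_zero _).symm.trans (Finset.sum_subtype _ (by simp) _)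
  calc (∑ i, μ i) ^ 2
      ≤ (∑ i : s, ‖toLp 2 (A *ᵥ u i)‖ * ‖toLp 2 (B *ᵥ v i)‖) ^ 2 := by
        rw [sum_eq]
        gcongr with i
        exact (singular_value i).trans_le (re_star_dotProduct_le _ _)
    _ ≤ (∑ i : s, ‖toLp 2 (A *ᵥ u i)‖ ^ 2) * ∑ i : s, ‖toLp 2 (B *ᵥ v i)‖ ^ 2 :=
        Finset.sum_mul_sq_le_sq_mul_sq _ _ _
    _ ≤ re (Aᴴ * A).trace * re (Bᴴ * B).trace := by
        gcongr
        · rw [re_trace_conjTranspose_mul_self]; positivity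
        · exact sum_norm_sq_mulVec_le_re_trace A hu
        · exact sum_norm_sq_mulVec_le_re_trace B (hv.comp _ Subtype.val_injective)

end TraceNorm

section SupportProjection

open Unitary (conjStarAlgAut)

variable {𝕜 : Type*} [RCLike 𝕜] {n : Type*} [Fintype n] [DecidableEq n] {A : Matrix n n 𝕜}

lemma Matrix.trace_conjStarAlgAut (U : unitary (Matrix n n 𝕜)) (D : Matrix n n 𝕜) :
    (conjStarAlgAut 𝕜 _ U D).trace = D.trace := by
  rw [Unitary.conjStarAlgAut_apply, trace_mul_comm, ← mul_assoc, Unitary.coe_star_mul_self,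
    one_mul]

lemma Matrix.PosSemidef.trace_sqrt (hA : A.PosSemidef) :
    hA.sqrt.trace = ∑ i, (√(hA.1.eigenvalues i) : 𝕜) := by
  rw [Matrix.PosSemidef.sqrt, ← Unitary.conjStarAlgAut_apply (S := 𝕜), trace_conjStarAlgAut,
    trace_diagonal]
  rfl

noncomputable def Matrix.IsHermitian.supportProj (hA : A.IsHermitian) : Matrix n n 𝕜 :=
  conjStarAlgAut 𝕜 _ hA.eigenvectorUnitary
    (diagonal fun i => if hA.eigenvalues i = 0 then 0 else 1)

lemma Matrix.IsHermitian.isStarProjection_supportProj (hA : A.IsHermitian) :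
    IsStarProjection hA.supportProj := by
  refine IsStarProjection.map ⟨?_, ?_⟩ (conjStarAlgAut 𝕜 _ hA.eigenvectorUnitary)
  · rw [IsIdempotentElem, diagonal_mul_diagonal]
    congr 1; funext i; split_ifs <;> simp
  · rw [IsSelfAdjoint, star_eq_conjTranspose, diagonal_conjTranspose]
    congr 1; funext i; split_ifs with h <;> simp [h]

lemma Matrix.IsHermitian.trace_supportProj (hA : A.IsHermitian) :
    hA.supportProj.trace = A.rank := by
  rw [supportProj, trace_conjStarAlgAut, trace_diagonal, hA.rank_eq_card_non_zero_eigs,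
    Fintype.card_subtype, Finset.sum_ite, Finset.sum_const_zero, zero_add, Finset.sum_const,
    nsmul_one]

lemma Matrix.PosSemidef.supportProj_mul_sqrt (hA : A.PosSemidef) :
    hA.1.supportProj * hA.sqrt = hA.sqrt := by
  rw [IsHermitian.supportProj, Matrix.PosSemidef.sqrt, ← Unitary.conjStarAlgAut_apply (S := 𝕜),
    ← map_mul, diagonal_mul_diagonal]
  congr 2; funext i; split_ifs with h <;> simp [h]

lemma Matrix.PosSemidef.sqrt_mul_self (hA : A.PosSemidef) : hA.sqrt * hA.sqrt = A := by
  conv_rhs => rw [hA.1.spectral_theorem]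
  rw [Matrix.PosSemidef.sqrt, ← Unitary.conjStarAlgAut_apply (S := 𝕜), ← map_mul,
    diagonal_mul_diagonal]
  congr 2; funext i
  simp [← RCLike.ofReal_mul, Real.mul_self_sqrt (hA.eigenvalues_nonneg i)]

end SupportProjection

section StarProjection

variable {𝕜 : Type*} [RCLike 𝕜] {n : Type*} [Fintype n] {P : Matrix n n 𝕜}

lemma IsStarProjection.re_star_dotProduct_mulVec (hP : IsStarProjection P) (x : n → 𝕜) :
    re (star x ⬝ᵥ P *ᵥ x) = ‖toLp 2 (P *ᵥ x)‖ ^ 2 := by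
  rw [← re_star_dotProduct_self, star_mulVec, ← dotProduct_mulVec, mulVec_mulVec,
    ← star_eq_conjTranspose, hP.isSelfAdjoint.star_eq, hP.isIdempotentElem.eq]

lemma IsStarProjection.norm_sq_mulVec_le [DecidableEq n] (hP : IsStarProjection P) (x : n → 𝕜) :
    ‖toLp 2 (P *ᵥ x)‖ ^ 2 ≤ ‖toLp 2 x‖ ^ 2 := by
  have split : re (star x ⬝ᵥ x) = re (star x ⬝ᵥ P *ᵥ x) + re (star x ⬝ᵥ (1 - P) *ᵥ x) := by
    rw [sub_mulVec, one_mulVec, dotProduct_sub, map_sub, add_sub_cancel]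
  rw [← re_star_dotProduct_self x, split, hP.re_star_dotProduct_mulVec,
    hP.one_sub.re_star_dotProduct_mulVec]
  exact le_add_of_nonneg_right (sq_nonneg _)

end StarProjection

namespace QAE

variable {n : Type*} [Fintype n]

lemma trace_mul_outer (A : Matrix n n ℂ) (v : n → ℂ) :
    (A * outer v).trace = star v ⬝ᵥ A *ᵥ v := by
  rw [outer, trace_mul_comm, vecMulVec_mul, trace_vecMulVec, dotProduct_comm, dotProduct_mulVec]

lemma posSemidef_sum_smul_outer {k : ℕ} {p : Fin k → ℝ} (hp0 : ∀ j, 0 ≤ p j)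
    (ψ : Fin k → n → ℂ) :
    (∑ j, (p j : ℂ) • outer (ψ j)).PosSemidef :=
  posSemidef_sum _ fun j _ =>
    (posSemidef_vecMulVec_self_star _).smul (Complex.zero_le_real.mpr (hp0 j))

theorem sqFidelity_le_of_mul_sqrt_eq [DecidableEq n] {ρ σ : Matrix n n ℂ} (hρ : ρ.PosSemidef)
    (hσ : σ.PosSemidef) {P : Matrix n n ℂ} (hP : P * hσ.sqrt = hσ.sqrt) :
    sqFidelity ρ σ ≤ (P * Pᴴ * ρ).trace.re * σ.trace.re := by
  set R := hρ.sqrt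
  set S := hσ.sqrt
  have hR : Rᴴ = R := hρ.posSemidef_sqrt.1.eq
  have hS : Sᴴ = S := hσ.posSemidef_sqrt.1.eq
  have hRR : R * R = ρ := hρ.sqrt_mul_self
  have hM := sandwich_psd hρ hσ
  have fidelity_eq : sqFidelity ρ σ = (∑ i, √(hM.1.eigenvalues i)) ^ 2 := by
    rw [sqFidelity, dif_pos ⟨hρ, hσ⟩, hM.trace_sqrt, Complex.re_sum]
    simp
  have hRP : (Pᴴ * R)ᴴ * S = R * S := by
    rw [conjTranspose_mul, conjTranspose_conjTranspose, hR, mul_assoc, hP]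
  have factor : S * ρ * S = ((Pᴴ * R)ᴴ * S)ᴴ * ((Pᴴ * R)ᴴ * S) := by
    rw [hRP, conjTranspose_mul, hR, hS, ← hRR]
    simp only [mul_assoc]
  rw [fidelity_eq]
  convert hM.1.sq_sum_sqrt_eigenvalues_le (Pᴴ * R) S factor using 2
  · rw [conjTranspose_mul, conjTranspose_conjTranspose, hR, ← hRR, ← mul_assoc,
      trace_mul_comm (P * Pᴴ * R)]
    simp only [mul_assoc]
    rfl
  · rw [hS, hσ.sqrt_mul_self]
    rfl

end QAE

section Majorization

variable {ι : Type*} [Fintype ι] [DecidableEq ι]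

theorem sum_mul_le_sum_of_threshold (s : Finset ι) {p q : ι → ℝ} {t : ℝ} (ht : 0 ≤ t)
    (hs : ∀ j ∈ s, t ≤ p j) (hsc : ∀ j ∉ s, p j ≤ t) (hq0 : ∀ j, 0 ≤ q j) (hq1 : ∀ j, q j ≤ 1)
    (hqs : ∑ j, q j ≤ #s) :
    ∑ j, p j * q j ≤ ∑ j ∈ s, p j :=
  calc ∑ j, p j * q j = ∑ j ∈ s, p j * q j + ∑ j ∈ sᶜ, p j * q j := (sum_add_sum_compl s _).symm
    _ ≤ ∑ j ∈ s, (p j - t * (1 - q j)) + ∑ j ∈ sᶜ, t * q j := by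
        gcongr with j hj j hj
        · nlinarith [hs j hj, hq1 j]
        · exact hq0 j
        · exact hsc j (mem_compl.mp hj)
    _ = ∑ j ∈ s, p j - t * (#s - ∑ j, q j) := by
        rw [← sum_add_sum_compl s q, sum_sub_distrib, ← mul_sum, ← mul_sum, sum_sub_distrib]
        simp only [sum_const, nsmul_eq_mul, mul_one]
        ring
    _ ≤ ∑ j ∈ s, p j := sub_le_self _ (mul_nonneg ht (sub_nonneg.mpr hqs))

theorem sum_mul_le_sum_lt_of_antitone {k r : ℕ} {p q : Fin k → ℝ} (hpa : Antitone p)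
    (hp0 : ∀ j, 0 ≤ p j) (hq0 : ∀ j, 0 ≤ q j) (hq1 : ∀ j, q j ≤ 1) (hqr : ∑ j, q j ≤ r) :
    ∑ j, p j * q j ≤ ∑ j ∈ univ.filter (fun j : Fin k => (j : ℕ) < r), p j := by
  have hqs : ∑ j, q j ≤ #(univ.filter fun j : Fin k => (j : ℕ) < r) := by
    rw [Fin.card_filter_val_lt, Nat.cast_min]
    refine le_min ?_ hqr
    simpa using sum_le_sum fun j (_ : j ∈ univ) => hq1 j
  by_cases hrk : r < k
  · refine sum_mul_le_sum_of_threshold _ (hp0 ⟨r, hrk⟩) (fun j hj => hpa ?_) (fun j hj => hpa ?_)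
      hq0 hq1 hqs
    · simp only [mem_filter, mem_univ, true_and] at hj
      exact Fin.mk_le_of_le_val hj.le
    · simp only [mem_filter, mem_univ, true_and, not_lt] at hj
      exact Fin.mk_le_of_le_val hj
  · refine sum_mul_le_sum_of_threshold _ le_rfl (fun j _ => hp0 j) (fun j hj => ?_) hq0 hq1 hqs
    simp only [mem_filter, mem_univ, true_and] at hj
    omega

end Majorization

theorem stmt2_general {n : Type*} [Fintype n] [DecidableEq n]
    {k : ℕ} (p : Fin k → ℝ) (ψ : Fin k → n → ℂ)
    (hpa : Antitone p) (hp0 : ∀ j, 0 ≤ p j)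
    (hor : ∀ i j, star (ψ i) ⬝ᵥ ψ j = if i = j then 1 else 0)
    (ρ : Matrix n n ℂ) (hρ : ρ = ∑ j, (p j : ℂ) • QAE.outer (ψ j))
    (σ : Matrix n n ℂ) (hσ : QAE.IsDensity σ) (r : ℕ) (hrank : σ.rank ≤ r) :
    QAE.sqFidelity ρ σ ≤ ∑ j ∈ Finset.univ.filter (fun j : Fin k => (j : ℕ) < r), p j := by
  obtain ⟨hσ_psd, hσ_trace⟩ := hσ
  set P := hσ_psd.1.supportProj
  have hP := hσ_psd.1.isStarProjection_supportProj
  have hψ : Orthonormal ℂ fun j => toLp 2 (ψ j) := orthonormal_toLp_iff.mpr hor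
  set q : Fin k → ℝ := fun j => ‖toLp 2 (P *ᵥ ψ j)‖ ^ 2
  have trace_eq : (P * Pᴴ * ρ).trace.re * σ.trace.re = ∑ j, p j * q j := by
    rw [hσ_trace, Complex.one_re, mul_one, ← star_eq_conjTranspose, hP.isSelfAdjoint.star_eq,
      hP.isIdempotentElem.eq, hρ, mul_sum, trace_sum, Complex.re_sum]
    refine sum_congr rfl fun j _ => ?_
    rw [mul_smul_comm, trace_smul, QAE.trace_mul_outer, smul_eq_mul, Complex.re_ofReal_mul]
    exact congrArg _ (hP.re_star_dotProduct_mulVec _)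
  have sum_q_le : ∑ j, q j ≤ r :=
    calc ∑ j, q j ≤ (Pᴴ * P).trace.re := sum_norm_sq_mulVec_le_re_trace P hψ
      _ = σ.rank := by
        rw [← star_eq_conjTranspose, hP.isSelfAdjoint.star_eq, hP.isIdempotentElem.eq,
          hσ_psd.1.trace_supportProj, Complex.natCast_re]
      _ ≤ r := by exact_mod_cast hrank
  calc QAE.sqFidelity ρ σ ≤ (P * Pᴴ * ρ).trace.re * σ.trace.re :=
        QAE.sqFidelity_le_of_mul_sqrt_eq (hρ ▸ QAE.posSemidef_sum_smul_outer hp0 ψ) hσ_psd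
          hσ_psd.supportProj_mul_sqrt
    _ = ∑ j, p j * q j := trace_eq
    _ ≤ _ := sum_mul_le_sum_lt_of_antitone hpa hp0 (fun j => sq_nonneg _)
        (fun j => (hP.norm_sq_mulVec_le _).trans_eq (by rw [hψ.1 j, one_pow])) sum_q_le

/-- F(ρ,σ) ≤ sum of the r largest eigenvalues of ρ when rank σ ≤ r. -/
theorem stmt2 {n : Type*} [Fintype n] [DecidableEq n]
    {k : ℕ} (p : Fin k → ℝ) (ψ : Fin k → n → ℂ)
    (hpa : Antitone p) (hp0 : ∀ j, 0 ≤ p j) (hp1 : ∑ j, p j = 1)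
    (hor : ∀ i j, star (ψ i) ⬝ᵥ ψ j = if i = j then 1 else 0)
    (ρ : Matrix n n ℂ) (hρ : ρ = ∑ j, (p j : ℂ) • QAE.outer (ψ j))
    (σ : Matrix n n ℂ) (hσ : QAE.IsDensity σ) (r : ℕ) (hrank : σ.rank ≤ r) :
    QAE.sqFidelity ρ σ ≤ ∑ j ∈ Finset.univ.filter (fun j : Fin k => (j : ℕ) < r), p j :=
  stmt2_general p ψ hpa hp0 hor ρ hρ σ hσ r hrank
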